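/- arXiv:1904.03880 — 2 statements merged into one kernel-verified Lean document; each statement's English description precedes it below -/
import Mathlib

section
/- Let (G,B,w) be a finite weighted graph with boundary and interior Ω. Any solution ω_φ of the boundary value problem δdω = 0 in Ω with ω = φ on boundary (k+1)-cliques minimizes the Dirichlet energy ⟨dα, dα⟩_G among all k-forms α on G with α = φ on boundary (k+1)-cliques. -/
open scoped Classical

namespace GraphHodge


variable {X : Type*}

/-- A tuple of vertices forms a clique: any two distinct indices give adjacent vertices. -/
def IsTupleClique (G : SimpleGraph X) {m : ℕ} (v : Fin m → X) : Prop :=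
  ∀ i j : Fin m, i ≠ j → G.Adj (v i) (v j)

/-- Indicator function of cliques. -/
noncomputable def cliqueInd (G : SimpleGraph X) {m : ℕ} (v : Fin m → X) : ℝ :=
  if IsTupleClique G v then 1 else 0

/-- A `k`-form on a graph: skew-symmetric and supported on `(k+1)`-cliques. -/
def IsGraphForm (G : SimpleGraph X) (k : ℕ) (α : (Fin (k + 1) → X) → ℝ) : Prop :=
  (∀ v, ¬ IsTupleClique G v → α v = 0) ∧
  ∀ (σ : Equiv.Perm (Fin (k + 1))) (v : Fin (k + 1) → X),
    α (v ∘ σ) = ((Equiv.Perm.sign σ : ℤ) : ℝ) * α v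

/-- The exterior differential of a `k`-form on a graph. -/
noncomputable def gd (G : SimpleGraph X) {k : ℕ} (α : (Fin (k + 1) → X) → ℝ) :
    (Fin (k + 2) → X) → ℝ :=
  fun v => cliqueInd G v * ∑ j : Fin (k + 2), (-1 : ℝ) ^ (j : ℕ) * α (v ∘ j.succAbove)

/-- Tensor product of an `r`-form and an `s`-form on a graph. -/
noncomputable def gtensor (G : SimpleGraph X) {r s : ℕ}
    (α : (Fin (r + 1) → X) → ℝ) (β : (Fin (s + 1) → X) → ℝ) :
    (Fin (r + s + 1) → X) → ℝ :=
  fun v => cliqueInd G v * α (fun i => v ⟨i.1, by have := i.2; omega⟩) *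
    β (fun i => v ⟨r + i.1, by have := i.2; omega⟩)

/-- Skew-symmetrization operator on functions of vertex tuples. -/
noncomputable def skewSym {m : ℕ} (f : (Fin m → X) → ℝ) : (Fin m → X) → ℝ :=
  fun v => ((m.factorial : ℝ))⁻¹ *
    ∑ σ : Equiv.Perm (Fin m), ((Equiv.Perm.sign σ : ℤ) : ℝ) * f (v ∘ σ)

/-- Wedge product of graph forms: skew-symmetrization of the tensor product. -/
noncomputable def gwedge (G : SimpleGraph X) {r s : ℕ}
    (α : (Fin (r + 1) → X) → ℝ) (β : (Fin (s + 1) → X) → ℝ) :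
    (Fin (r + s + 1) → X) → ℝ :=
  skewSym (gtensor G α β)

/-- A positive weight on all cliques of a graph, symmetric in its arguments and
vanishing off cliques. -/
structure GraphWeight (G : SimpleGraph X) where
  w : ∀ {m : ℕ}, (Fin (m + 1) → X) → ℝ
  symm : ∀ {m : ℕ} (σ : Equiv.Perm (Fin (m + 1))) (v : Fin (m + 1) → X), w (v ∘ σ) = w v
  pos : ∀ {m : ℕ} (v : Fin (m + 1) → X), IsTupleClique G v → 0 < w v
  eq_zero : ∀ {m : ℕ} (v : Fin (m + 1) → X), ¬ IsTupleClique G v → w v = 0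

variable {G : SimpleGraph X}

/-- The weighted inner product on `k`-forms of a finite weighted graph. -/
noncomputable def formInner [Fintype X] (w : GraphWeight G) {k : ℕ}
    (α β : (Fin (k + 1) → X) → ℝ) : ℝ :=
  (((k + 1).factorial : ℝ))⁻¹ * ∑ v : Fin (k + 1) → X, α v * β v * w.w v

/-- The codifferential (formal adjoint of `gd`) on a finite weighted graph. -/
noncomputable def gdelta [Fintype X] (w : GraphWeight G) {k : ℕ}
    (α : (Fin (k + 2) → X) → ℝ) : (Fin (k + 1) → X) → ℝ :=
  fun v => (w.w v)⁻¹ * ∑ u : X, α (Fin.cons u v) * w.w (Fin.cons u v)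

/-- `(G, B)` is a graph with boundary `B`: no edges inside `B`, and every boundary
vertex is adjacent to some interior vertex. -/
def IsBoundary (G : SimpleGraph X) (B : Set X) : Prop :=
  (∀ a ∈ B, ∀ b ∈ B, ¬ G.Adj a b) ∧ ∀ b ∈ B, ∃ a, a ∉ B ∧ G.Adj b a

/-- A boundary tuple: a clique whose first vertex is in `B` and the rest interior. -/
def IsBdryTuple (G : SimpleGraph X) (B : Set X) {k : ℕ} (v : Fin (k + 1) → X) : Prop :=
  IsTupleClique G v ∧ v 0 ∈ B ∧ ∀ i : Fin k, v i.succ ∉ B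

/-- A boundary `k`-form: supported on boundary `(k+1)`-cliques and skew-symmetric in
its last `k` variables. -/
def IsBdryForm (G : SimpleGraph X) (B : Set X) (k : ℕ) (φ : (Fin (k + 1) → X) → ℝ) : Prop :=
  (∀ v, ¬ IsBdryTuple G B v → φ v = 0) ∧
  ∀ (σ : Equiv.Perm (Fin k)) (v : Fin (k + 1) → X),
    φ (Fin.cons (v 0) (fun i => v (σ i).succ)) = ((Equiv.Perm.sign σ : ℤ) : ℝ) * φ v

/-- Inner product over tuples entirely inside the interior `Ω = Bᶜ`. -/
noncomputable def innerInt [Fintype X] (w : GraphWeight G) (B : Set X) {k : ℕ}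
    (α β : (Fin (k + 1) → X) → ℝ) : ℝ :=
  (((k + 1).factorial : ℝ))⁻¹ *
    ∑ v : Fin (k + 1) → X, (if ∀ i, v i ∉ B then (1 : ℝ) else 0) * (α v * β v * w.w v)

/-- Boundary inner product: first vertex in `B`, the others interior. -/
noncomputable def innerBdry [Fintype X] (w : GraphWeight G) (B : Set X) {k : ℕ}
    (α β : (Fin (k + 1) → X) → ℝ) : ℝ :=
  ((k.factorial : ℝ))⁻¹ *
    ∑ v : Fin (k + 1) → X,
      (if v 0 ∈ B ∧ ∀ i : Fin k, v i.succ ∉ B then (1 : ℝ) else 0) * (α v * β v * w.w v)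

/-- The normal-trace operator `𝐍` on `(k+1)`-forms. -/
noncomputable def Nop [Fintype X] (w : GraphWeight G) (B : Set X) {k : ℕ}
    (α : (Fin (k + 2) → X) → ℝ) : (Fin (k + 1) → X) → ℝ :=
  fun v => (w.w v)⁻¹ *
    ∑ u : X, (if u ∉ B then (1 : ℝ) else 0) * α (Fin.cons u v) * w.w (Fin.cons u v)

/-- The Dirichlet-trace operator `𝐃`: forget the boundary vertex. -/
def Dop {k : ℕ} (α : (Fin (k + 1) → X) → ℝ) : (Fin (k + 2) → X) → ℝ :=
  fun v => α (fun i => v i.succ)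

section Aux

/-- composing a clique tuple with a permutation keeps it a clique -/
lemma IsTupleClique.comp_perm {m : ℕ} {v : Fin m → X} (h : IsTupleClique G v)
    (σ : Equiv.Perm (Fin m)) : IsTupleClique G (v ∘ σ) := fun i j hij =>
  h (σ i) (σ j) (fun he => hij (σ.injective he))

lemma cliqueInd_comp_perm {m : ℕ} (v : Fin m → X) (σ : Equiv.Perm (Fin m)) :
    cliqueInd G (v ∘ σ) = cliqueInd G v := by
  unfold cliqueInd
  by_cases h : IsTupleClique G v
  · rw [if_pos (h.comp_perm σ), if_pos h]
  · rw [if_neg, if_neg h]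
    intro hc
    apply h
    have := hc.comp_perm σ⁻¹
    have he : (v ∘ σ) ∘ ⇑σ⁻¹ = v := by
      funext i; simp
    rwa [he] at this

/-- key combinatorial decomposition: `σ ∘ succAbove j = succAbove (σ j) ∘ π` with
sign `π = sign σ * (-1)^j * (-1)^(σ j)`. -/
lemma succAbove_perm_decomp {n : ℕ} (σ : Equiv.Perm (Fin (n + 1))) (j : Fin (n + 1)) :
    ∃ π : Equiv.Perm (Fin n), (∀ i, σ (j.succAbove i) = (σ j).succAbove (π i)) ∧
      ((Equiv.Perm.sign π : ℤ) : ℝ) =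
        ((Equiv.Perm.sign σ : ℤ) : ℝ) * (-1) ^ (j : ℕ) * (-1) ^ ((σ j : Fin (n + 1)) : ℕ) := by
  set ρ : Equiv.Perm (Fin (n + 1)) := (σ j).cycleRange * σ * (j.cycleRange)⁻¹ with hρdef
  have hρ0 : ρ 0 = 0 := by
    show (σ j).cycleRange (σ (j.cycleRange⁻¹ 0)) = 0
    rw [Equiv.Perm.inv_def, Fin.cycleRange_symm_zero, Fin.cycleRange_self]
  refine ⟨(Equiv.Perm.decomposeFin ρ).2, ?_, ?_⟩
  all_goals (
    have hfst : (Equiv.Perm.decomposeFin ρ).1 = 0 := by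
      have h := Equiv.Perm.decomposeFin_symm_apply_zero
        (Equiv.Perm.decomposeFin ρ).1 (Equiv.Perm.decomposeFin ρ).2
      rw [Prod.mk.eta, Equiv.symm_apply_apply] at h
      rw [← h, hρ0]
    have hρeq : ρ = Equiv.Perm.decomposeFin.symm (0, (Equiv.Perm.decomposeFin ρ).2) := by
      rw [← hfst, Prod.mk.eta]
      exact (Equiv.symm_apply_apply _ _).symm
    have hsucc : ∀ x : Fin n, ρ x.succ = ((Equiv.Perm.decomposeFin ρ).2 x).succ := by
      intro x
      conv_lhs => rw [hρeq]
      rw [Equiv.Perm.decomposeFin_symm_apply_succ, Equiv.swap_self, Equiv.refl_apply])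
  · intro i
    have e1 : (j.cycleRange)⁻¹ i.succ = j.succAbove i := by
      rw [Equiv.Perm.inv_def, Fin.cycleRange_symm_succ]
    have e2 : ρ i.succ = (σ j).cycleRange (σ (j.succAbove i)) := by
      simp only [hρdef, Equiv.Perm.mul_apply, e1]
    have e3 := hsucc i
    rw [e2] at e3
    have := congrArg ((σ j).cycleRange.symm) e3
    rwa [Equiv.symm_apply_apply, Fin.cycleRange_symm_succ] at this
  · have hsρ : Equiv.Perm.sign ρ = Equiv.Perm.sign σ * (-1) ^ (j : ℕ) * (-1) ^ ((σ j : Fin (n+1)) : ℕ) := by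
      simp only [hρdef, map_mul, map_inv, Fin.sign_cycleRange, Int.units_inv_eq_self]
      simp [mul_comm, mul_left_comm, mul_assoc]
    have hsπ : Equiv.Perm.sign ρ = Equiv.Perm.sign (Equiv.Perm.decomposeFin ρ).2 := by
      conv_lhs => rw [hρeq]
      rw [Equiv.Perm.decomposeFin.symm_sign, if_pos rfl, one_mul]
    rw [← hsπ, hsρ]
    push_cast
    ring

/-- `gd` preserves skew-symmetry. -/
lemma gd_skew {k : ℕ} {ω : (Fin (k + 1) → X) → ℝ}
    (hω : ∀ (σ : Equiv.Perm (Fin (k + 1))) v, ω (v ∘ σ) = ((Equiv.Perm.sign σ : ℤ) : ℝ) * ω v)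
    (σ : Equiv.Perm (Fin (k + 2))) (v : Fin (k + 2) → X) :
    gd G ω (v ∘ σ) = ((Equiv.Perm.sign σ : ℤ) : ℝ) * gd G ω v := by
  unfold gd
  rw [cliqueInd_comp_perm]
  have hterm : ∀ j : Fin (k + 2), (-1 : ℝ) ^ (j : ℕ) * ω ((v ∘ σ) ∘ j.succAbove)
      = ((Equiv.Perm.sign σ : ℤ) : ℝ)
        * ((-1) ^ ((σ j : Fin (k + 2)) : ℕ) * ω (v ∘ (σ j).succAbove)) := by
    intro j
    obtain ⟨π, hπ, hs⟩ := succAbove_perm_decomp σ j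
    have hc : (v ∘ σ) ∘ j.succAbove = (v ∘ (σ j).succAbove) ∘ π := by
      funext i
      simp only [Function.comp_apply, hπ i]
    rw [hc, hω π, hs]
    have h1 : ((-1 : ℝ)) ^ (j : ℕ) * (-1) ^ (j : ℕ) = 1 := by
      rw [← pow_add]
      exact Even.neg_one_pow ⟨(j : ℕ), rfl⟩
    calc (-1 : ℝ) ^ (j : ℕ) * (((Equiv.Perm.sign σ : ℤ) : ℝ) * (-1) ^ (j : ℕ)
            * (-1) ^ ((σ j : Fin (k+2)) : ℕ) * ω (v ∘ (σ j).succAbove))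
        = ((-1 : ℝ) ^ (j : ℕ) * (-1) ^ (j : ℕ)) * (((Equiv.Perm.sign σ : ℤ) : ℝ)
            * ((-1) ^ ((σ j : Fin (k+2)) : ℕ) * ω (v ∘ (σ j).succAbove))) := by ring
      _ = _ := by rw [h1, one_mul]
  rw [Finset.sum_congr rfl (fun j _ => hterm j), ← Finset.mul_sum]
  rw [Equiv.sum_comp σ (fun m => (-1 : ℝ) ^ (m : ℕ) * ω (v ∘ m.succAbove))]
  ring

lemma clique_of_cons {k : ℕ} {x : X} {v : Fin (k + 1) → X}
    (h : IsTupleClique G (Fin.cons x v)) : IsTupleClique G v := by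
  intro i j hij
  have := h i.succ j.succ (fun he => hij (Fin.succ_injective _ he))
  simpa [Fin.cons_succ] using this

/-- adjointness of `gd` and `gdelta` for a skew-symmetric `(k+2)`-tuple function. -/
lemma gd_adjoint [Fintype X] (w : GraphWeight G) {k : ℕ} (γ : (Fin (k + 2) → X) → ℝ)
    (hγ : ∀ (σ : Equiv.Perm (Fin (k + 2))) v, γ (v ∘ σ) = ((Equiv.Perm.sign σ : ℤ) : ℝ) * γ v)
    (β : (Fin (k + 1) → X) → ℝ) :
    formInner w γ (gd G β) = formInner w (gdelta w γ) β := by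
  have E : ℝ := 0
  have key : ∀ u : Fin (k + 2) → X, γ u * gd G β u * w.w u
      = ∑ j : Fin (k + 2), (-1 : ℝ) ^ (j : ℕ) * (γ u * β (u ∘ j.succAbove) * w.w u) := by
    intro u
    by_cases h : IsTupleClique G u
    · rw [gd, cliqueInd, if_pos h, one_mul, Finset.mul_sum, Finset.sum_mul]
      exact Finset.sum_congr rfl fun j _ => by ring
    · rw [w.eq_zero u h]
      simp
  have step3 : ∀ j : Fin (k + 2),
      (∑ u : Fin (k + 2) → X, (-1 : ℝ) ^ (j : ℕ) * (γ u * β (u ∘ j.succAbove) * w.w u))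
      = ∑ u : Fin (k + 2) → X, γ u * β (u ∘ Fin.succ) * w.w u := by
    intro j
    have hbij : Function.Bijective (fun u : Fin (k + 2) → X => u ∘ ⇑(j.cycleRange)) := by
      constructor
      · intro a b hab
        funext i
        have := congrFun hab ((j.cycleRange).symm i)
        simpa using this
      · intro b
        exact ⟨b ∘ ⇑(j.cycleRange).symm, by funext i; simp⟩
    refine (Fintype.sum_bijective _ hbij _ _ ?_).symm
    intro u
    have h1 : γ (u ∘ ⇑(j.cycleRange)) = (-1 : ℝ) ^ (j : ℕ) * γ u := by
      rw [hγ j.cycleRange u]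
      norm_num [Fin.sign_cycleRange]
    have h2 : (u ∘ ⇑(j.cycleRange)) ∘ j.succAbove = u ∘ Fin.succ := by
      funext i
      simp [Fin.cycleRange_succAbove]
    have h3 : w.w (u ∘ ⇑(j.cycleRange)) = w.w u := w.symm j.cycleRange u
    rw [h1, h2, h3]
    have h4 : ((-1 : ℝ)) ^ (j : ℕ) * (-1) ^ (j : ℕ) = 1 := by
      rw [← pow_add]
      exact Even.neg_one_pow ⟨(j : ℕ), rfl⟩
    calc γ u * β (u ∘ Fin.succ) * w.w u
        = ((-1 : ℝ) ^ (j:ℕ) * (-1) ^ (j:ℕ)) * (γ u * β (u ∘ Fin.succ) * w.w u) := by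
          rw [h4, one_mul]
      _ = (-1 : ℝ) ^ (j:ℕ) * ((-1) ^ (j:ℕ) * γ u * β (u ∘ Fin.succ) * w.w u) := by ring
  have hsplit : ∀ u : Fin (k + 2) → X, γ u * β (u ∘ Fin.succ) * w.w u
      = γ (Fin.cons (u 0) (u ∘ Fin.succ)) * β (u ∘ Fin.succ)
        * w.w (Fin.cons (u 0) (u ∘ Fin.succ)) := by
    intro u
    have : Fin.cons (u 0) (u ∘ Fin.succ) = u := by
      funext i
      refine Fin.cases ?_ ?_ i <;> simp
    rw [this]
  have hb2 : Function.Bijective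
      (fun p : X × (Fin (k + 1) → X) => (Fin.cons p.1 p.2 : Fin (k + 2) → X)) := by
    constructor
    · rintro ⟨a, va⟩ ⟨b, vb⟩ h
      have h0 := congrFun h 0
      simp only [Fin.cons_zero] at h0
      have h1 : va = vb := by
        funext i
        have := congrFun h i.succ
        simpa [Fin.cons_succ] using this
      simp [h0, h1]
    · intro u
      refine ⟨(u 0, u ∘ Fin.succ), ?_⟩
      funext i
      refine Fin.cases ?_ ?_ i <;> simp
  have step5 : (∑ u : Fin (k + 2) → X, γ u * β (u ∘ Fin.succ) * w.w u)
      = ∑ v : Fin (k + 1) → X, ∑ x : X, γ (Fin.cons x v) * β v * w.w (Fin.cons x v) := by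
    rw [← Fintype.sum_bijective _ hb2
      (fun p : X × (Fin (k+1) → X) => γ (Fin.cons p.1 p.2) * β p.2 * w.w (Fin.cons p.1 p.2))
      (fun u => γ u * β (u ∘ Fin.succ) * w.w u) ?_]
    · rw [Fintype.sum_prod_type]
      exact Finset.sum_comm
    · rintro ⟨x, v⟩
      have hv : (Fin.cons x v : Fin (k+2) → X) ∘ Fin.succ = v := by
        funext i; simp [Fin.cons_succ]
      simp only [hv]
  have hr : ∀ v : Fin (k + 1) → X, gdelta w γ v * β v * w.w v
      = ∑ x : X, γ (Fin.cons x v) * β v * w.w (Fin.cons x v) := by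
    intro v
    by_cases h : IsTupleClique G v
    · have hz : w.w v ≠ 0 := ne_of_gt (w.pos v h)
      rw [gdelta]
      calc (w.w v)⁻¹ * (∑ x : X, γ (Fin.cons x v) * w.w (Fin.cons x v)) * β v * w.w v
          = (w.w v * (w.w v)⁻¹)
            * ((∑ x : X, γ (Fin.cons x v) * w.w (Fin.cons x v)) * β v) := by ring
        _ = (∑ x : X, γ (Fin.cons x v) * w.w (Fin.cons x v)) * β v := by
            rw [mul_inv_cancel₀ hz, one_mul]
        _ = ∑ x : X, γ (Fin.cons x v) * β v * w.w (Fin.cons x v) := by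
            rw [Finset.sum_mul]
            exact Finset.sum_congr rfl fun x _ => by ring
    · rw [w.eq_zero v h, mul_zero]
      symm
      apply Finset.sum_eq_zero
      intro x _
      rw [w.eq_zero _ (fun hc => h (clique_of_cons hc)), mul_zero]
  have hfac : (((k + 2).factorial : ℝ)) = ((k : ℝ) + 2) * ((k + 1).factorial : ℝ) := by
    rw [Nat.factorial_succ]
    push_cast
    ring
  unfold formInner
  rw [Finset.sum_congr rfl (fun u _ => key u), Finset.sum_comm]
  rw [Finset.sum_congr rfl (fun j _ => step3 j)]
  rw [Finset.sum_const, Finset.card_univ, Fintype.card_fin, step5]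
  rw [Finset.sum_congr rfl (fun v _ => hr v)]
  rw [nsmul_eq_mul]
  have h2 : ((k : ℝ) + 2) ≠ 0 := by positivity
  have hf1 : (((k + 1).factorial : ℝ)) ≠ 0 := Nat.cast_ne_zero.mpr (Nat.factorial_ne_zero _)
  show (((k + 1 + 1).factorial : ℝ))⁻¹ * _ = _
  have : ((k + 1 + 1).factorial : ℝ) = ((k + 2).factorial : ℝ) := by norm_num
  rw [this, hfac, mul_inv]
  push_cast
  field_simp

lemma formInner_nonneg [Fintype X] (w : GraphWeight G) {k : ℕ}
    (β : (Fin (k + 1) → X) → ℝ) : 0 ≤ formInner w β β := by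
  unfold formInner
  apply mul_nonneg
  · positivity
  · apply Finset.sum_nonneg
    intro v _
    apply mul_nonneg (mul_self_nonneg _)
    by_cases h : IsTupleClique G v
    · exact (w.pos v h).le
    · rw [w.eq_zero v h]

lemma formInner_expand [Fintype X] (w : GraphWeight G) {k : ℕ}
    (a b : (Fin (k + 1) → X) → ℝ) :
    formInner w (fun v => a v + b v) (fun v => a v + b v)
      = formInner w a a + (formInner w a b + (formInner w a b + formInner w b b)) := by
  unfold formInner
  rw [← mul_add, ← mul_add, ← mul_add, ← Finset.sum_add_distrib, ← Finset.sum_add_distrib,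
    ← Finset.sum_add_distrib]
  congr 1
  apply Finset.sum_congr rfl
  intro v _
  ring

end Aux

/-- Dirichlet principle: a solution of `δdω = 0` in `Ω` with boundary
values `φ` minimizes the Dirichlet energy `⟨dα, dα⟩_G` among all `k`-forms with the
same boundary values. -/
theorem dirichlet_principle {X : Type*} [Fintype X] (G : SimpleGraph X) (B : Set X)
    (hB : IsBoundary G B) (w : GraphWeight G) (k : ℕ)
    (φ : (Fin (k + 1) → X) → ℝ) (hφ : IsBdryForm G B k φ)
    (ω : (Fin (k + 1) → X) → ℝ) (hω : IsGraphForm G k ω)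
    (hharm : ∀ v : Fin (k + 1) → X, (∀ i, v i ∉ B) → gdelta w (gd G ω) v = 0)
    (hbv : ∀ v : Fin (k + 1) → X, IsBdryTuple G B v → ω v = φ v)
    (α : (Fin (k + 1) → X) → ℝ) (hα : IsGraphForm G k α)
    (hbva : ∀ v : Fin (k + 1) → X, IsBdryTuple G B v → α v = φ v) :
    formInner w (gd G ω) (gd G ω) ≤ formInner w (gd G α) (gd G α) := by
  classical
  set η : (Fin (k + 1) → X) → ℝ := fun v => α v - ω v with hη
  have hηskew : ∀ (σ : Equiv.Perm (Fin (k + 1))) v,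
      η (v ∘ σ) = ((Equiv.Perm.sign σ : ℤ) : ℝ) * η v := by
    intro σ v
    simp only [hη, hα.2 σ v, hω.2 σ v]
    ring
  -- the cross term vanishes
  have hzero : ∀ v : Fin (k + 1) → X, gdelta w (gd G ω) v * η v * w.w v = 0 := by
    intro v
    by_cases hcl : IsTupleClique G v
    · by_cases hint : ∀ i, v i ∉ B
      · rw [hharm v hint, zero_mul, zero_mul]
      · push_neg at hint
        obtain ⟨i₀, hi₀⟩ := hint
        -- exactly one boundary vertex; move it to the front
        have hv0 : ∀ m : Fin (k + 1), m ≠ i₀ → v m ∉ B := by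
          intro m hm hmB
          exact hB.1 _ hmB _ hi₀ (hcl m i₀ hm)
        have hηv : η v = 0 := by
          set σ : Equiv.Perm (Fin (k + 1)) := Equiv.swap 0 i₀ with hσ
          have hbt : IsBdryTuple G B (v ∘ σ) := by
            refine ⟨hcl.comp_perm σ, ?_, ?_⟩
            · show v (σ 0) ∈ B
              rw [hσ, Equiv.swap_apply_left]
              exact hi₀
            · intro m
              show v (σ m.succ) ∉ B
              by_cases hms : m.succ = i₀
              · have hi0 : i₀ ≠ 0 := by rw [← hms]; exact Fin.succ_ne_zero m
                rw [hσ, hms, Equiv.swap_apply_right]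
                exact hv0 0 (Ne.symm hi0)
              · rw [hσ, Equiv.swap_apply_of_ne_of_ne (Fin.succ_ne_zero m) hms]
                exact hv0 m.succ hms
          have h1 : η (v ∘ σ) = 0 := by
            simp only [hη]
            rw [hbva _ hbt, hbv _ hbt, sub_self]
          have h2 := hηskew σ v
          rw [h1] at h2
          have hs : ((Equiv.Perm.sign σ : ℤ) : ℝ) ≠ 0 := by
            rcases Int.units_eq_one_or (Equiv.Perm.sign σ) with h | h <;> simp [h]
          exact (mul_eq_zero.mp h2.symm).resolve_left hs
        rw [hηv, mul_zero, zero_mul]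
    · rw [w.eq_zero v hcl, mul_zero]
  have hcross : formInner w (gd G ω) (gd G η) = 0 := by
    rw [gd_adjoint w (gd G ω) (gd_skew hω.2) η]
    unfold formInner
    rw [Finset.sum_congr rfl (fun v _ => hzero v), Finset.sum_const, smul_zero, mul_zero]
  have hgda : gd G α = fun v => gd G ω v + gd G η v := by
    funext v
    unfold gd
    rw [← mul_add, ← Finset.sum_add_distrib]
    congr 1
    apply Finset.sum_congr rfl
    intro j _
    simp only [hη]
    ring
  rw [hgda, formInner_expand, hcross]
  have := formInner_nonneg w (gd G η)
  linarith

end GraphHodge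
end

section
/- Let (G,B,w) be a finite weighted graph with boundary and interior Ω. The operator norm of the DtN map T^{(k)}_{δd} satisfies ‖T^{(k)}_{δd}‖ ≤ (k+1) max over boundary (k+1)-cliques {v,u_1,...,u_k} of (Σ_{u∈Ω} w(u,v,u_1,...,u_k)) / w(v,u_1,...,u_k). -/
open scoped Classical

namespace GraphHodge


variable {X : Type*}

variable {G : SimpleGraph X}

/-! ### Auxiliary lemmas -/

section Aux

variable {G : SimpleGraph X}

lemma isTupleClique_comp {m : ℕ} (σ : Equiv.Perm (Fin m)) (v : Fin m → X) :
    IsTupleClique G (v ∘ σ) ↔ IsTupleClique G v := by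
  constructor
  · intro h i j hij
    have := h (σ.symm i) (σ.symm j) (fun hc => hij (by simpa using congrArg σ hc))
    simpa using this
  · intro h i j hij
    exact h (σ i) (σ j) fun hc => hij (σ.injective hc)

lemma isTupleClique_of_cons {m : ℕ} {u : X} {v : Fin (m + 1) → X}
    (h : IsTupleClique G (Fin.cons u v)) : IsTupleClique G v := by
  intro i j hij
  have := h i.succ j.succ (by simpa [Fin.succ_inj] using hij)
  simpa using this

lemma cliqueInd_comp {m : ℕ} (σ : Equiv.Perm (Fin m)) (v : Fin m → X) :
    cliqueInd G (v ∘ σ) = cliqueInd G v := by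
  unfold cliqueInd
  simp [isTupleClique_comp]

lemma sum_comp_perm [Fintype X] {m : ℕ} (σ : Equiv.Perm (Fin m)) (f : (Fin m → X) → ℝ) :
    ∑ z : Fin m → X, f (z ∘ σ) = ∑ z : Fin m → X, f z := by
  rw [← Equiv.sum_comp (Equiv.arrowCongr σ.symm (Equiv.refl X)) f]
  refine Finset.sum_congr rfl fun z _ => ?_
  congr 1

lemma sum_cons_eq [Fintype X] {m : ℕ} (f : (Fin (m + 1) → X) → ℝ) :
    ∑ z : Fin (m + 1) → X, f z = ∑ u : X, ∑ v : Fin m → X, f (Fin.cons u v) := by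
  rw [← Equiv.sum_comp (Fin.consEquiv (fun _ : Fin (m + 1) => X)) f, Fintype.sum_prod_type]
  rfl

lemma comp_succ_of_fixzero {m : ℕ} (ρ : Equiv.Perm (Fin (m + 1))) (h0 : ρ 0 = 0) :
    ∃ e : Equiv.Perm (Fin m), (∀ i : Fin m, ρ i.succ = (e i).succ) ∧
      Equiv.Perm.sign e = Equiv.Perm.sign ρ := by
  set pe := Equiv.Perm.decomposeFin ρ with hpe
  have hρ : Equiv.Perm.decomposeFin.symm pe = ρ := Equiv.symm_apply_apply _ _
  have hp0 : pe.1 = 0 := by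
    have := Equiv.Perm.decomposeFin_symm_apply_zero pe.1 pe.2
    rw [Prod.mk.eta, hρ] at this
    rw [← this, h0]
  refine ⟨pe.2, fun i => ?_, ?_⟩
  · have := Equiv.Perm.decomposeFin_symm_apply_succ pe.2 pe.1 i
    rw [Prod.mk.eta, hρ] at this
    rw [this, hp0]
    simp
  · have := Equiv.Perm.decomposeFin.symm_sign pe.1 pe.2
    rw [Prod.mk.eta, hρ, hp0] at this
    simp at this
    rw [this]

noncomputable def sgn {m : ℕ} (σ : Equiv.Perm (Fin m)) : ℝ :=
  ((Equiv.Perm.sign σ : ℤ) : ℝ)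

lemma sgn_mul {m : ℕ} (σ τ : Equiv.Perm (Fin m)) : sgn (σ * τ) = sgn σ * sgn τ := by
  simp [sgn]

lemma sgn_inv {m : ℕ} (σ : Equiv.Perm (Fin m)) : sgn σ⁻¹ = sgn σ := by
  simp [sgn]

lemma sgn_sq {m : ℕ} (σ : Equiv.Perm (Fin m)) : sgn σ * sgn σ = 1 := by
  rw [sgn, ← Int.cast_mul, ← Units.val_mul, Int.units_mul_self]
  norm_num

lemma neg_one_pow_eq_sgn {m : ℕ} (j : Fin m) :
    (-1 : ℝ) ^ (j : ℕ) = sgn (Fin.cycleRange j) := by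
  rw [sgn, Fin.sign_cycleRange]
  push_cast
  norm_num

lemma sign_shuffle {s c d x y : ℝ} (hs : s * s = 1) (h : c * s * x = d * y) :
    c * x = s * (d * y) := by
  calc c * x = (s * s) * (c * x) := by rw [hs, one_mul]
  _ = s * (c * s * x) := by ring
  _ = s * (d * y) := by rw [h]

lemma cycleRange_inv_zero {m : ℕ} (i : Fin (m + 1)) : (Fin.cycleRange i)⁻¹ 0 = i := by
  rw [Equiv.Perm.inv_def, Equiv.symm_apply_eq, Fin.cycleRange_self]

lemma comp_succAbove {k : ℕ} (z : Fin (k + 2) → X) (j : Fin (k + 2)) :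
    z ∘ j.succAbove = z ∘ ⇑(Fin.cycleRange j)⁻¹ ∘ Fin.succ := by
  funext i
  simp only [Function.comp_apply]
  congr 1
  rw [Equiv.Perm.inv_def, Equiv.eq_symm_apply]
  exact Fin.cycleRange_succAbove j i

lemma graphForm_perm_aux {k : ℕ} {ω : (Fin (k + 1) → X) → ℝ} (hω : IsGraphForm G k ω)
    (v : Fin (k + 2) → X) (π₁ π₂ : Equiv.Perm (Fin (k + 2))) (h : π₁⁻¹ 0 = π₂⁻¹ 0) :
    sgn π₁ * ω (v ∘ ⇑π₁⁻¹ ∘ Fin.succ) = sgn π₂ * ω (v ∘ ⇑π₂⁻¹ ∘ Fin.succ) := by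
  have h0 : (π₁ * π₂⁻¹) 0 = 0 := by
    rw [Equiv.Perm.mul_apply, ← h, Equiv.Perm.inv_def, Equiv.apply_symm_apply]
  obtain ⟨e, he, hsign⟩ := comp_succ_of_fixzero _ h0
  have hfun : v ∘ ⇑π₂⁻¹ ∘ Fin.succ = (v ∘ ⇑π₁⁻¹ ∘ Fin.succ) ∘ ⇑e := by
    funext i
    simp only [Function.comp_apply]
    rw [← he i, Equiv.Perm.mul_apply, Equiv.Perm.inv_def π₁, Equiv.symm_apply_apply]
  rw [hfun, hω.2 e]
  have hse : sgn e = sgn π₁ * sgn π₂ := by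
    have : sgn e = sgn (π₁ * π₂⁻¹) := by rw [sgn, sgn, hsign]
    rw [this, sgn_mul, sgn_inv]
  show sgn π₁ * ω (v ∘ ⇑π₁⁻¹ ∘ Fin.succ) = sgn π₂ * (sgn e * ω (v ∘ ⇑π₁⁻¹ ∘ Fin.succ))
  rw [hse]
  linear_combination (-(sgn π₁ * ω (v ∘ ⇑π₁⁻¹ ∘ Fin.succ))) * sgn_sq π₂

lemma gd_comp_perm {k : ℕ} {ω : (Fin (k + 1) → X) → ℝ} (hω : IsGraphForm G k ω)
    (σ : Equiv.Perm (Fin (k + 2))) (v : Fin (k + 2) → X) :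
    gd G ω (v ∘ ⇑σ) = sgn σ * gd G ω v := by
  unfold gd
  rw [cliqueInd_comp]
  have key : ∑ j : Fin (k + 2), (-1 : ℝ) ^ (j : ℕ) * ω ((v ∘ ⇑σ) ∘ j.succAbove)
      = sgn σ * ∑ j : Fin (k + 2), (-1 : ℝ) ^ (j : ℕ) * ω (v ∘ j.succAbove) := by
    rw [Finset.mul_sum]
    rw [← Equiv.sum_comp σ (fun j => sgn σ * ((-1 : ℝ) ^ (j : ℕ) * ω (v ∘ j.succAbove)))]
    refine Finset.sum_congr rfl fun j _ => ?_
    have e1 : (v ∘ ⇑σ) ∘ j.succAbove = v ∘ ⇑(Fin.cycleRange j * σ⁻¹)⁻¹ ∘ Fin.succ := by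
      rw [comp_succAbove (v ∘ ⇑σ) j, mul_inv_rev, inv_inv]
      rfl
    have e2 : v ∘ (σ j).succAbove = v ∘ ⇑(Fin.cycleRange (σ j))⁻¹ ∘ Fin.succ :=
      comp_succAbove v (σ j)
    rw [e1, e2]
    have h0 : (Fin.cycleRange j * σ⁻¹)⁻¹ 0 = (Fin.cycleRange (σ j))⁻¹ 0 := by
      rw [mul_inv_rev, inv_inv, Equiv.Perm.mul_apply, cycleRange_inv_zero,
        cycleRange_inv_zero]
    have key2 := graphForm_perm_aux hω v (Fin.cycleRange j * σ⁻¹) (Fin.cycleRange (σ j)) h0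
    rw [sgn_mul, sgn_inv] at key2
    rw [neg_one_pow_eq_sgn j, neg_one_pow_eq_sgn (σ j)]
    exact sign_shuffle (sgn_sq σ) key2
  rw [key]
  ring

lemma w_nonneg (w : GraphWeight G) {m : ℕ} (v : Fin (m + 1) → X) : 0 ≤ w.w v := by
  by_cases h : IsTupleClique G v
  · exact (w.pos v h).le
  · rw [w.eq_zero v h]

lemma clique_of_w_ne_zero {w : GraphWeight G} {m : ℕ} {v : Fin (m + 1) → X}
    (h : w.w v ≠ 0) : IsTupleClique G v := by
  by_contra hc
  exact h (w.eq_zero v hc)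

lemma w_cons_eq_zero (w : GraphWeight G) {m : ℕ} {v : Fin (m + 1) → X}
    (h : w.w v = 0) (u : X) : w.w (Fin.cons u v) = 0 := by
  refine w.eq_zero _ fun hc => ?_
  exact absurd h (w.pos v (isTupleClique_of_cons hc)).ne'

lemma bdry_unique {B : Set X} {m : ℕ} (hB : IsBoundary G B) {v : Fin m → X}
    (hc : IsTupleClique G v) {i j : Fin m} (hi : v i ∈ B) (hj : v j ∈ B) : i = j := by
  by_contra hij
  exact hB.1 _ hi _ hj (hc i j hij)

lemma w_cons_bdry {B : Set X} (hB : IsBoundary G B) (w : GraphWeight G) {m : ℕ}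
    {v : Fin (m + 1) → X} (hv : v 0 ∈ B) {u : X} (hu : u ∈ B) :
    w.w (Fin.cons u v) = 0 := by
  refine w.eq_zero _ fun hc => ?_
  have h01 := hc 0 1 (by simp)
  rw [Fin.cons_zero, show (1 : Fin (m + 2)) = (0 : Fin (m + 1)).succ from
    Fin.succ_zero_eq_one.symm, Fin.cons_succ] at h01
  exact hB.1 u hu (v 0) hv h01

end Aux

set_option maxHeartbeats 2000000 in
/-- operator norm bound
`‖T^{(k)}_{δd}‖ ≤ (k+1) · max_{boundary (k+1)-cliques} (∑_{u∈Ω} w(u,v,u₁,…,u_k)) / w(v,u₁,…,u_k)`. -/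
theorem dtn_deltad_norm_bound {X : Type*} [Fintype X] (G : SimpleGraph X) (B : Set X)
    (hB : IsBoundary G B) (w : GraphWeight G) (k : ℕ)
    (φ : (Fin (k + 1) → X) → ℝ) (hφ : IsBdryForm G B k φ)
    (ω : (Fin (k + 1) → X) → ℝ) (hω : IsGraphForm G k ω)
    (hharm : ∀ v : Fin (k + 1) → X, (∀ i, v i ∉ B) → gdelta w (gd G ω) v = 0)
    (hbv : ∀ v : Fin (k + 1) → X, IsBdryTuple G B v → ω v = φ v)
    (C : ℝ)
    (hC : ∀ v : Fin (k + 1) → X, IsBdryTuple G B v →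
      (∑ u : X, if u ∉ B then w.w (Fin.cons u v) else 0) / w.w v ≤ C) :
    Real.sqrt (innerBdry w B (Nop w B (gd G ω)) (Nop w B (gd G ω))) ≤
      ((k : ℝ) + 1) * C * Real.sqrt (innerBdry w B φ φ) := by
  classical
  set d : (Fin (k + 2) → X) → ℝ := gd G ω with hd
  set Tv : (Fin (k + 1) → X) → ℝ := Nop w B (gd G ω) with hTv
  set χb : (Fin (k + 1) → X) → ℝ :=
    fun v => if v 0 ∈ B ∧ ∀ i : Fin k, v i.succ ∉ B then 1 else 0 with hχb
  set ι : X → ℝ := fun u => if u ∉ B then 1 else 0 with hι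
  set SN : ℝ := ∑ v : Fin (k + 1) → X, χb v * (Tv v * Tv v * w.w v) with hSN
  set SP : ℝ := ∑ v : Fin (k + 1) → X, χb v * (Tv v * φ v * w.w v) with hSP
  set SQ : ℝ := ∑ v : Fin (k + 1) → X, χb v * (φ v * φ v * w.w v) with hSQ
  have hIN : innerBdry w B (Nop w B (gd G ω)) (Nop w B (gd G ω))
      = ((k.factorial : ℝ))⁻¹ * SN := rfl
  have hIQ : innerBdry w B φ φ = ((k.factorial : ℝ))⁻¹ * SQ := rfl
  have hSNnn : 0 ≤ SN := by
    refine Finset.sum_nonneg fun v _ => ?_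
    have : 0 ≤ Tv v * Tv v * w.w v := mul_nonneg (mul_self_nonneg _) (w_nonneg w v)
    have hb : (0:ℝ) ≤ χb v := by simp only [hχb]; positivity
    exact mul_nonneg hb this
  have hSQnn : 0 ≤ SQ := by
    refine Finset.sum_nonneg fun v _ => ?_
    have : 0 ≤ φ v * φ v * w.w v := mul_nonneg (mul_self_nonneg _) (w_nonneg w v)
    have hb : (0:ℝ) ≤ χb v := by simp only [hχb]; positivity
    exact mul_nonneg hb this
  by_cases hex : ∃ v : Fin (k + 1) → X, IsBdryTuple G B v
  case neg =>
    -- no boundary tuples: both sides vanish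
    have hzero : ∀ (α : (Fin (k + 1) → X) → ℝ) (v : Fin (k + 1) → X),
        χb v * (α v * α v * w.w v) = 0 := by
      intro α v
      by_cases hb : v 0 ∈ B ∧ ∀ i : Fin k, v i.succ ∉ B
      · by_cases hw : w.w v = 0
        · rw [hw]; ring
        · exact absurd ⟨clique_of_w_ne_zero hw, hb.1, hb.2⟩ (hex ⟨v, ·⟩)
      · rw [hχb]; simp [hb]
    have h1 : SN = 0 := Finset.sum_eq_zero fun v _ => hzero Tv v
    have h2 : SQ = 0 := Finset.sum_eq_zero fun v _ => hzero φ v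
    rw [hIN, hIQ, h1, h2, mul_zero, Real.sqrt_zero, mul_zero]
  case pos =>
  obtain ⟨v₀, hv₀⟩ := hex
  have hC0 : 0 ≤ C := by
    refine le_trans ?_ (hC v₀ hv₀)
    apply div_nonneg
    · refine Finset.sum_nonneg fun u _ => ?_
      split
      · exact w_nonneg w _
      · exact le_refl 0
    · exact w_nonneg w v₀
  -- pointwise harmonicity, cleared of denominators
  have harm : ∀ v : Fin (k + 1) → X, (∀ i, v i ∉ B) →
      ∑ u : X, d (Fin.cons u v) * w.w (Fin.cons u v) = 0 := by
    intro v hint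
    by_cases hw : w.w v = 0
    · exact Finset.sum_eq_zero fun u _ => by rw [w_cons_eq_zero w hw u, mul_zero]
    · have := hharm v hint
      rw [gdelta] at this
      rcases mul_eq_zero.mp this with h | h
      · exact absurd h (inv_ne_zero hw)
      · exact h
  set S : ℝ := ∑ v : Fin (k + 1) → X, ∑ u : X,
      χb v * (ι u * (d (Fin.cons u v) * d (Fin.cons u v) * w.w (Fin.cons u v))) with hS
  set E1 : ℝ := ∑ z : Fin (k + 2) → X,
      (if z 1 ∈ B then (1:ℝ) else 0) * (d z * d z * w.w z) with hE1
  set E : ℝ := ∑ z : Fin (k + 2) → X, d z * d z * w.w z with hE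
  set A : ℝ := ∑ z : Fin (k + 2) → X, ω (Fin.tail z) * (d z * w.w z) with hA
  set Ab : ℝ := ∑ z : Fin (k + 2) → X,
      (if z 1 ∈ B then (1:ℝ) else 0) * (ω (Fin.tail z) * (d z * w.w z)) with hAb
  have step1 : SN ≤ C * S := by
    rw [hSN, hS, Finset.mul_sum]
    refine Finset.sum_le_sum fun v _ => ?_
    by_cases hb : v 0 ∈ B ∧ ∀ i : Fin k, v i.succ ∉ B
    · by_cases hw : w.w v = 0
      · have hL : χb v * (Tv v * Tv v * w.w v) = 0 := by rw [hw]; ring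
        have hR : ∀ u : X, χb v * (ι u * (d (Fin.cons u v) * d (Fin.cons u v) *
            w.w (Fin.cons u v))) = 0 := fun u => by
          rw [w_cons_eq_zero w hw u]; ring
        rw [hL, Finset.sum_eq_zero fun u _ => hR u, mul_zero]
      · have hcl := clique_of_w_ne_zero hw
        have hwpos : 0 < w.w v := lt_of_le_of_ne (w_nonneg w v) (Ne.symm hw)
        have hbt : IsBdryTuple G B v := ⟨hcl, hb.1, hb.2⟩
        have hχb1 : χb v = 1 := by simp only [hχb]; rw [if_pos hb]
        have hTveq : Tv v = (w.w v)⁻¹ * ∑ u : X, (if u ∉ B then (1:ℝ) else 0) *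
            d (Fin.cons u v) * w.w (Fin.cons u v) := rfl
        have hwub : ∀ u : X, (0:ℝ) ≤ ι u * w.w (Fin.cons u v) := fun u =>
          mul_nonneg (by simp only [hι]; positivity) (w_nonneg w _)
        have key := Finset.sum_mul_sq_le_sq_mul_sq Finset.univ
          (fun u : X => Real.sqrt (ι u * w.w (Fin.cons u v)))
          (fun u : X => Real.sqrt (ι u * w.w (Fin.cons u v)) * d (Fin.cons u v))
        have e1 : ∑ u : X, Real.sqrt (ι u * w.w (Fin.cons u v)) *
            (Real.sqrt (ι u * w.w (Fin.cons u v)) * d (Fin.cons u v))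
            = ∑ u : X, (if u ∉ B then (1:ℝ) else 0) * d (Fin.cons u v) *
              w.w (Fin.cons u v) := by
          refine Finset.sum_congr rfl fun u _ => ?_
          have h := Real.mul_self_sqrt (hwub u)
          calc Real.sqrt (ι u * w.w (Fin.cons u v)) *
              (Real.sqrt (ι u * w.w (Fin.cons u v)) * d (Fin.cons u v))
              = (Real.sqrt (ι u * w.w (Fin.cons u v)) *
                Real.sqrt (ι u * w.w (Fin.cons u v))) * d (Fin.cons u v) := by ring
          _ = (ι u * w.w (Fin.cons u v)) * d (Fin.cons u v) := by rw [h]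
          _ = (if u ∉ B then (1:ℝ) else 0) * d (Fin.cons u v) * w.w (Fin.cons u v) := by
              simp only [hι]; ring
        have e2 : ∑ u : X, (Real.sqrt (ι u * w.w (Fin.cons u v))) ^ 2
            = ∑ u : X, ι u * w.w (Fin.cons u v) :=
          Finset.sum_congr rfl fun u _ => Real.sq_sqrt (hwub u)
        have e3 : ∑ u : X, (Real.sqrt (ι u * w.w (Fin.cons u v)) * d (Fin.cons u v)) ^ 2
            = ∑ u : X, ι u * (d (Fin.cons u v) * d (Fin.cons u v) * w.w (Fin.cons u v)) := by
          refine Finset.sum_congr rfl fun u _ => ?_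
          have h := Real.mul_self_sqrt (hwub u)
          calc (Real.sqrt (ι u * w.w (Fin.cons u v)) * d (Fin.cons u v)) ^ 2
              = (Real.sqrt (ι u * w.w (Fin.cons u v)) *
                Real.sqrt (ι u * w.w (Fin.cons u v))) *
                (d (Fin.cons u v) * d (Fin.cons u v)) := by ring
          _ = (ι u * w.w (Fin.cons u v)) * (d (Fin.cons u v) * d (Fin.cons u v)) := by rw [h]
          _ = ι u * (d (Fin.cons u v) * d (Fin.cons u v) * w.w (Fin.cons u v)) := by ring
        rw [e1, e2, e3] at key
        have hCb : ∑ u : X, ι u * w.w (Fin.cons u v) ≤ C * w.w v := by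
          have h1 := hC v hbt
          rw [div_le_iff₀ hwpos] at h1
          calc ∑ u : X, ι u * w.w (Fin.cons u v)
              = ∑ u : X, (if u ∉ B then w.w (Fin.cons u v) else 0) := by
                refine Finset.sum_congr rfl fun u _ => ?_
                simp only [hι]; split <;> simp
          _ ≤ C * w.w v := h1
        have hDnn : 0 ≤ ∑ u : X, ι u * (d (Fin.cons u v) * d (Fin.cons u v) *
            w.w (Fin.cons u v)) :=
          Finset.sum_nonneg fun u _ => mul_nonneg (by simp only [hι]; positivity)
            (mul_nonneg (mul_self_nonneg _) (w_nonneg w _))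
        have key2 : (∑ u : X, (if u ∉ B then (1:ℝ) else 0) * d (Fin.cons u v) *
            w.w (Fin.cons u v)) ^ 2 ≤ (C * w.w v) * ∑ u : X, ι u *
            (d (Fin.cons u v) * d (Fin.cons u v) * w.w (Fin.cons u v)) :=
          le_trans key (mul_le_mul_of_nonneg_right hCb hDnn)
        have hgoalL : χb v * (Tv v * Tv v * w.w v) = (w.w v)⁻¹ *
            (∑ u : X, (if u ∉ B then (1:ℝ) else 0) * d (Fin.cons u v) *
              w.w (Fin.cons u v)) ^ 2 := by
          rw [hχb1, hTveq]
          field_simp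
        have hgoalR : ∑ u : X, χb v * (ι u * (d (Fin.cons u v) * d (Fin.cons u v) *
            w.w (Fin.cons u v))) = ∑ u : X, ι u * (d (Fin.cons u v) * d (Fin.cons u v) *
            w.w (Fin.cons u v)) := by
          refine Finset.sum_congr rfl fun u _ => ?_
          rw [hχb1, one_mul]
        rw [hgoalL, hgoalR]
        calc (w.w v)⁻¹ * (∑ u : X, (if u ∉ B then (1:ℝ) else 0) * d (Fin.cons u v) *
              w.w (Fin.cons u v)) ^ 2
            ≤ (w.w v)⁻¹ * ((C * w.w v) * ∑ u : X, ι u * (d (Fin.cons u v) *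
              d (Fin.cons u v) * w.w (Fin.cons u v))) :=
              mul_le_mul_of_nonneg_left key2 (by positivity)
        _ = C * ∑ u : X, ι u * (d (Fin.cons u v) * d (Fin.cons u v) *
              w.w (Fin.cons u v)) := by
            field_simp
    · have hχb0 : χb v = 0 := by simp only [hχb]; rw [if_neg hb]
      rw [hχb0]
      simp
  have hdnn : ∀ z : Fin (k + 2) → X, (0:ℝ) ≤ d z * d z * w.w z := fun z =>
    mul_nonneg (mul_self_nonneg _) (w_nonneg w z)
  have step2 : S ≤ E1 := by
    rw [hE1, sum_cons_eq (fun z => (if z 1 ∈ B then (1:ℝ) else 0) * (d z * d z * w.w z)),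
      hS, Finset.sum_comm]
    refine Finset.sum_le_sum fun u _ => Finset.sum_le_sum fun v _ => ?_
    have h1 : (Fin.cons u v : Fin (k + 2) → X) 1 = v 0 := by
      rw [← Fin.succ_zero_eq_one, Fin.cons_succ]
    rw [h1]
    by_cases h0 : v 0 ∈ B
    · rw [if_pos h0, one_mul]
      have hb1 : χb v ≤ 1 := by simp only [hχb]; split <;> norm_num
      have hb0 : (0:ℝ) ≤ χb v := by simp only [hχb]; positivity
      have hi1 : ι u ≤ 1 := by simp only [hι]; split <;> norm_num
      have hi0 : (0:ℝ) ≤ ι u := by simp only [hι]; positivity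
      calc χb v * (ι u * (d (Fin.cons u v) * d (Fin.cons u v) * w.w (Fin.cons u v)))
          = (χb v * ι u) * (d (Fin.cons u v) * d (Fin.cons u v) * w.w (Fin.cons u v)) := by
            ring
      _ ≤ 1 * (d (Fin.cons u v) * d (Fin.cons u v) * w.w (Fin.cons u v)) :=
          mul_le_mul_of_nonneg_right (mul_le_one₀ hb1 hi0 hi1) (hdnn _)
      _ = d (Fin.cons u v) * d (Fin.cons u v) * w.w (Fin.cons u v) := one_mul _
    · have hχ0 : χb v = 0 := by simp only [hχb]; rw [if_neg (fun h => h0 h.1)]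
      rw [hχ0, if_neg h0, zero_mul, zero_mul]
  have step2' : True := trivial
  have step3 : ((k : ℝ) + 2) * E1 ≤ E := by
    have hEi : ∀ i : Fin (k + 2), (∑ z : Fin (k + 2) → X,
        (if z i ∈ B then (1:ℝ) else 0) * (d z * d z * w.w z)) = E1 := by
      intro i
      rw [hE1, ← sum_comp_perm (Equiv.swap 1 i)
        (fun z => (if z 1 ∈ B then (1:ℝ) else 0) * (d z * d z * w.w z))]
      refine Finset.sum_congr rfl fun z _ => ?_
      have h1 : (z ∘ ⇑(Equiv.swap 1 i)) 1 = z i := by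
        simp [Equiv.swap_apply_left]
      have hdz : d (z ∘ ⇑(Equiv.swap 1 i)) = sgn (Equiv.swap 1 i) * d z := by
        rw [hd]; exact gd_comp_perm hω _ z
      have h3 : w.w (z ∘ ⇑(Equiv.swap 1 i)) = w.w z := w.symm _ z
      rw [h1, hdz, h3]
      linear_combination (-((if z i ∈ B then (1:ℝ) else 0) * (d z * d z * w.w z))) *
        sgn_sq (Equiv.swap (1 : Fin (k + 2)) i)
    have hsum : ∑ i : Fin (k + 2), (∑ z : Fin (k + 2) → X,
        (if z i ∈ B then (1:ℝ) else 0) * (d z * d z * w.w z)) = ((k : ℝ) + 2) * E1 := by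
      rw [Finset.sum_congr rfl (fun i _ => hEi i), Finset.sum_const, Finset.card_univ,
        Fintype.card_fin, nsmul_eq_mul]
      push_cast
      ring
    rw [← hsum, Finset.sum_comm, hE]
    refine Finset.sum_le_sum fun z _ => ?_
    rw [← Finset.sum_mul]
    by_cases hcl : IsTupleClique G z
    · have hle1 : (∑ i : Fin (k + 2), if z i ∈ B then (1:ℝ) else 0) ≤ 1 := by
        by_cases hexB : ∃ i : Fin (k + 2), z i ∈ B
        · obtain ⟨i0, hi0⟩ := hexB
          have hb : ∀ i : Fin (k + 2), (if z i ∈ B then (1:ℝ) else 0)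
              ≤ if i = i0 then 1 else 0 := by
            intro i
            by_cases hi : z i ∈ B
            · rw [if_pos hi, if_pos (bdry_unique hB hcl hi hi0)]
            · rw [if_neg hi]; positivity
          calc (∑ i : Fin (k + 2), if z i ∈ B then (1:ℝ) else 0)
              ≤ ∑ i : Fin (k + 2), if i = i0 then (1:ℝ) else 0 :=
                Finset.sum_le_sum fun i _ => hb i
          _ = 1 := by rw [Finset.sum_ite_eq' Finset.univ i0 (fun _ => (1:ℝ)),
                if_pos (Finset.mem_univ i0)]
        · push_neg at hexB
          rw [Finset.sum_eq_zero fun i _ => if_neg (hexB i)]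
          norm_num
      calc (∑ i : Fin (k + 2), if z i ∈ B then (1:ℝ) else 0) * (d z * d z * w.w z)
          ≤ 1 * (d z * d z * w.w z) := mul_le_mul_of_nonneg_right hle1 (hdnn z)
      _ = d z * d z * w.w z := one_mul _
    · have hw : w.w z = 0 := w.eq_zero z hcl
      rw [hw]
      simp
  have step4 : E = ((k : ℝ) + 2) * A := by
    have hgw : ∀ z : Fin (k + 2) → X, d z * w.w z
        = (∑ j : Fin (k + 2), (-1:ℝ) ^ (j : ℕ) * ω (z ∘ j.succAbove)) * w.w z := by
      intro z
      rw [hd]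
      show gd G ω z * w.w z = _
      unfold gd
      by_cases hcl : IsTupleClique G z
      · rw [cliqueInd, if_pos hcl, one_mul]
      · rw [w.eq_zero z hcl, mul_zero, mul_zero]
    have e0 : E = ∑ z : Fin (k + 2) → X, ∑ j : Fin (k + 2),
        (-1:ℝ) ^ (j : ℕ) * ω (z ∘ j.succAbove) * (d z * w.w z) := by
      rw [hE]
      refine Finset.sum_congr rfl fun z _ => ?_
      calc d z * d z * w.w z = d z * (d z * w.w z) := by ring
      _ = d z * ((∑ j : Fin (k + 2), (-1:ℝ) ^ (j : ℕ) * ω (z ∘ j.succAbove)) * w.w z) := by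
          rw [← hgw z]
      _ = ∑ j : Fin (k + 2), (-1:ℝ) ^ (j : ℕ) * ω (z ∘ j.succAbove) * (d z * w.w z) := by
          rw [Finset.sum_mul, Finset.mul_sum]
          exact Finset.sum_congr rfl fun j _ => by ring
    have hAj : ∀ j : Fin (k + 2), (∑ z : Fin (k + 2) → X,
        (-1:ℝ) ^ (j : ℕ) * ω (z ∘ j.succAbove) * (d z * w.w z)) = A := by
      intro j
      rw [hA, ← sum_comp_perm (Fin.cycleRange j)⁻¹
        (fun z => ω (Fin.tail z) * (d z * w.w z))]
      refine Finset.sum_congr rfl fun z _ => ?_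
      have ht : Fin.tail (z ∘ ⇑(Fin.cycleRange j)⁻¹) = z ∘ j.succAbove := by
        funext i
        exact (congrFun (comp_succAbove z j) i).symm
      have hdz : d (z ∘ ⇑(Fin.cycleRange j)⁻¹) = sgn (Fin.cycleRange j) * d z := by
        rw [hd]
        rw [gd_comp_perm hω _ z, sgn_inv]
      have hwz : w.w (z ∘ ⇑(Fin.cycleRange j)⁻¹) = w.w z := w.symm _ z
      rw [ht, hdz, hwz, ← neg_one_pow_eq_sgn]
      ring
    rw [e0, Finset.sum_comm]
    calc ∑ j : Fin (k + 2), ∑ z : Fin (k + 2) → X,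
        (-1:ℝ) ^ (j : ℕ) * ω (z ∘ j.succAbove) * (d z * w.w z)
        = ∑ _j : Fin (k + 2), A := Finset.sum_congr rfl fun j _ => hAj j
    _ = ((k : ℝ) + 2) * A := by
        rw [Finset.sum_const, Finset.card_univ, Fintype.card_fin, nsmul_eq_mul]
        push_cast
        ring
  have step5 : A = ((k : ℝ) + 1) * Ab := by
    have hpoint : ∀ z : Fin (k + 2) → X, ω (Fin.tail z) * (d z * w.w z)
        = (if ∀ i : Fin (k + 1), z i.succ ∉ B then (1:ℝ) else 0) *
            (ω (Fin.tail z) * (d z * w.w z))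
          + ∑ i : Fin (k + 1), (if z i.succ ∈ B then (1:ℝ) else 0) *
            (ω (Fin.tail z) * (d z * w.w z)) := by
      intro z
      by_cases hcl : IsTupleClique G z
      · by_cases hint : ∀ i : Fin (k + 1), z i.succ ∉ B
        · rw [if_pos hint, one_mul,
            Finset.sum_eq_zero fun i (_ : i ∈ Finset.univ) => by
              rw [if_neg (hint i), zero_mul], add_zero]
        · push_neg at hint
          obtain ⟨i0, hi0⟩ := hint
          rw [if_neg (fun h => (h i0) hi0), zero_mul, zero_add, ← Finset.sum_mul]
          have hsum : (∑ i : Fin (k + 1), if z i.succ ∈ B then (1:ℝ) else 0) = 1 := by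
            have hb : ∀ i : Fin (k + 1), (if z i.succ ∈ B then (1:ℝ) else 0)
                = if i = i0 then 1 else 0 := by
              intro i
              by_cases hi : z i.succ ∈ B
              · have : i = i0 := Fin.succ_injective _ (bdry_unique hB hcl hi hi0)
                rw [if_pos hi, if_pos this]
              · rw [if_neg hi, if_neg (fun h => hi (by rw [h]; exact hi0))]
            rw [Finset.sum_congr rfl fun i _ => hb i,
              Finset.sum_ite_eq' Finset.univ i0 (fun _ => (1:ℝ)),
              if_pos (Finset.mem_univ i0)]
          rw [hsum, one_mul]
      · have hw : w.w z = 0 := w.eq_zero z hcl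
        rw [hw]
        simp
    have hsplit : A = (∑ z : Fin (k + 2) → X,
          (if ∀ i : Fin (k + 1), z i.succ ∉ B then (1:ℝ) else 0) *
            (ω (Fin.tail z) * (d z * w.w z)))
        + ∑ i : Fin (k + 1), ∑ z : Fin (k + 2) → X,
          (if z i.succ ∈ B then (1:ℝ) else 0) * (ω (Fin.tail z) * (d z * w.w z)) := by
      rw [hA, Finset.sum_congr rfl fun z _ => hpoint z, Finset.sum_add_distrib,
        Finset.sum_comm]
    have hzero1 : (∑ z : Fin (k + 2) → X,
        (if ∀ i : Fin (k + 1), z i.succ ∉ B then (1:ℝ) else 0) *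
          (ω (Fin.tail z) * (d z * w.w z))) = 0 := by
      rw [sum_cons_eq (fun z => (if ∀ i : Fin (k + 1), z i.succ ∉ B then (1:ℝ) else 0) *
          (ω (Fin.tail z) * (d z * w.w z))), Finset.sum_comm]
      refine Finset.sum_eq_zero fun v _ => ?_
      by_cases hint : ∀ i : Fin (k + 1), v i ∉ B
      · have he : ∀ u : X, (if ∀ i : Fin (k + 1), (Fin.cons u v : Fin (k + 2) → X) i.succ ∉ B
            then (1:ℝ) else 0) * (ω (Fin.tail (Fin.cons u v : Fin (k + 2) → X)) *
              (d (Fin.cons u v) * w.w (Fin.cons u v)))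
            = ω v * (d (Fin.cons u v) * w.w (Fin.cons u v)) := by
          intro u
          rw [if_pos (by simpa using hint), one_mul, Fin.tail_cons]
        rw [Finset.sum_congr rfl fun u _ => he u, ← Finset.mul_sum, harm v hint, mul_zero]
      · refine Finset.sum_eq_zero fun u _ => ?_
        rw [if_neg (by simpa using hint), zero_mul]
    have hib : ∀ i : Fin (k + 1), (∑ z : Fin (k + 2) → X,
        (if z i.succ ∈ B then (1:ℝ) else 0) * (ω (Fin.tail z) * (d z * w.w z))) = Ab := by
      intro i
      rw [hAb, ← sum_comp_perm (Equiv.swap 1 i.succ)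
        (fun z => (if z 1 ∈ B then (1:ℝ) else 0) * (ω (Fin.tail z) * (d z * w.w z)))]
      refine Finset.sum_congr rfl fun z _ => ?_
      have hσ0 : (Equiv.swap (1 : Fin (k + 2)) i.succ) 0 = 0 :=
        Equiv.swap_apply_of_ne_of_ne (by simp) (Fin.succ_ne_zero i).symm
      obtain ⟨e, he, hsgne⟩ := comp_succ_of_fixzero _ hσ0
      have h1 : (z ∘ ⇑(Equiv.swap 1 i.succ)) 1 = z i.succ := by
        simp [Equiv.swap_apply_left]
      have htail : Fin.tail (z ∘ ⇑(Equiv.swap 1 i.succ)) = Fin.tail z ∘ ⇑e := by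
        funext i'
        show z ((Equiv.swap 1 i.succ) i'.succ) = z ((e i').succ)
        rw [he i']
      have hωt : ω (Fin.tail (z ∘ ⇑(Equiv.swap 1 i.succ)))
          = sgn (Equiv.swap 1 i.succ) * ω (Fin.tail z) := by
        rw [htail, hω.2 e]
        congr 1
        rw [sgn, hsgne]
      have hdz : d (z ∘ ⇑(Equiv.swap 1 i.succ)) = sgn (Equiv.swap 1 i.succ) * d z := by
        rw [hd]; exact gd_comp_perm hω _ z
      have hwz : w.w (z ∘ ⇑(Equiv.swap 1 i.succ)) = w.w z := w.symm _ z
      rw [h1, hωt, hdz, hwz]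
      linear_combination (-((if z i.succ ∈ B then (1:ℝ) else 0) *
        (ω (Fin.tail z) * (d z * w.w z)))) * sgn_sq (Equiv.swap (1 : Fin (k + 2)) i.succ)
    rw [hsplit, hzero1, zero_add, Finset.sum_congr rfl fun i _ => hib i,
      Finset.sum_const, Finset.card_univ, Fintype.card_fin, nsmul_eq_mul]
    push_cast
    ring
  have step6 : Ab = SP := by
    rw [hAb, sum_cons_eq (fun z => (if z 1 ∈ B then (1:ℝ) else 0) *
      (ω (Fin.tail z) * (d z * w.w z))), Finset.sum_comm, hSP]
    refine Finset.sum_congr rfl fun v _ => ?_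
    have hc1 : ∀ u : X, ((Fin.cons u v : Fin (k + 2) → X) 1 ∈ B) = (v 0 ∈ B) := by
      intro u
      rw [← Fin.succ_zero_eq_one, Fin.cons_succ]
    by_cases hw : w.w v = 0
    · have hz : ∀ u : X, (if (Fin.cons u v : Fin (k + 2) → X) 1 ∈ B then (1:ℝ) else 0) *
          (ω (Fin.tail (Fin.cons u v : Fin (k + 2) → X)) * (d (Fin.cons u v) * w.w (Fin.cons u v))) = 0 := by
        intro u
        rw [w_cons_eq_zero w hw u]
        ring
      rw [Finset.sum_eq_zero fun u _ => hz u, hw]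
      ring
    · have hcl : IsTupleClique G v := clique_of_w_ne_zero hw
      by_cases h0 : v 0 ∈ B
      · have hrest : ∀ i : Fin k, v i.succ ∉ B := by
          intro i hi
          exact (Fin.succ_ne_zero i) (bdry_unique hB hcl hi h0)
        have hbt : IsBdryTuple G B v := ⟨hcl, h0, hrest⟩
        have hφv : ω v = φ v := hbv v hbt
        have hχb1 : χb v = 1 := by simp only [hχb]; rw [if_pos ⟨h0, hrest⟩]
        have hLHS : ∑ u : X, (if (Fin.cons u v : Fin (k + 2) → X) 1 ∈ B then (1:ℝ) else 0) *
            (ω (Fin.tail (Fin.cons u v : Fin (k + 2) → X)) * (d (Fin.cons u v) * w.w (Fin.cons u v)))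
            = ω v * ∑ u : X, d (Fin.cons u v) * w.w (Fin.cons u v) := by
          rw [Finset.mul_sum]
          refine Finset.sum_congr rfl fun u _ => ?_
          rw [hc1 u, if_pos h0, one_mul, Fin.tail_cons]
        have hTveq : Tv v = (w.w v)⁻¹ * ∑ u : X, (if u ∉ B then (1:ℝ) else 0) *
            d (Fin.cons u v) * w.w (Fin.cons u v) := rfl
        have hdrop : ∑ u : X, (if u ∉ B then (1:ℝ) else 0) *
            d (Fin.cons u v) * w.w (Fin.cons u v)
            = ∑ u : X, d (Fin.cons u v) * w.w (Fin.cons u v) := by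
          refine Finset.sum_congr rfl fun u _ => ?_
          by_cases hu : u ∈ B
          · rw [w_cons_bdry hB w h0 hu]
            simp
          · rw [if_pos hu, one_mul]
        rw [hLHS, hχb1, one_mul, hTveq, hdrop, ← hφv]
        field_simp
      · have hχb0 : χb v = 0 := by
          simp only [hχb]; rw [if_neg (fun h => h0 h.1)]
        have hz : ∀ u : X, (if (Fin.cons u v : Fin (k + 2) → X) 1 ∈ B then (1:ℝ) else 0) *
            (ω (Fin.tail (Fin.cons u v : Fin (k + 2) → X)) * (d (Fin.cons u v) * w.w (Fin.cons u v))) = 0 := by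
          intro u
          rw [hc1 u, if_neg h0, zero_mul]
        rw [Finset.sum_eq_zero fun u _ => hz u, hχb0, zero_mul]
  -- combine
  have hE1A : E1 ≤ A := by
    have h2pos : (0:ℝ) < (k : ℝ) + 2 := by positivity
    rw [step4] at step3
    exact le_of_mul_le_mul_left step3 h2pos
  have hchain : SN ≤ ((k : ℝ) + 1) * C * SP := by
    calc SN ≤ C * S := step1
    _ ≤ C * E1 := by exact mul_le_mul_of_nonneg_left step2 hC0
    _ ≤ C * A := mul_le_mul_of_nonneg_left hE1A hC0
    _ = ((k : ℝ) + 1) * C * SP := by rw [step5, step6]; ring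
  have hCS : SP * SP ≤ SN * SQ := by
    have hcw : ∀ v : Fin (k + 1) → X, (0:ℝ) ≤ χb v * w.w v := fun v =>
      mul_nonneg (by simp only [hχb]; positivity) (w_nonneg w v)
    have key := Finset.sum_mul_sq_le_sq_mul_sq Finset.univ
      (fun v : Fin (k + 1) → X => Real.sqrt (χb v * w.w v) * Tv v)
      (fun v : Fin (k + 1) → X => Real.sqrt (χb v * w.w v) * φ v)
    have e1 : ∑ v : Fin (k + 1) → X, (Real.sqrt (χb v * w.w v) * Tv v) *
        (Real.sqrt (χb v * w.w v) * φ v) = SP := by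
      rw [hSP]
      refine Finset.sum_congr rfl fun v _ => ?_
      have h := Real.mul_self_sqrt (hcw v)
      calc (Real.sqrt (χb v * w.w v) * Tv v) * (Real.sqrt (χb v * w.w v) * φ v)
          = (Real.sqrt (χb v * w.w v) * Real.sqrt (χb v * w.w v)) * (Tv v * φ v) := by ring
      _ = (χb v * w.w v) * (Tv v * φ v) := by rw [h]
      _ = χb v * (Tv v * φ v * w.w v) := by ring
    have e2 : ∑ v : Fin (k + 1) → X, (Real.sqrt (χb v * w.w v) * Tv v) ^ 2 = SN := by
      rw [hSN]
      refine Finset.sum_congr rfl fun v _ => ?_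
      have h := Real.mul_self_sqrt (hcw v)
      calc (Real.sqrt (χb v * w.w v) * Tv v) ^ 2
          = (Real.sqrt (χb v * w.w v) * Real.sqrt (χb v * w.w v)) * (Tv v * Tv v) := by ring
      _ = (χb v * w.w v) * (Tv v * Tv v) := by rw [h]
      _ = χb v * (Tv v * Tv v * w.w v) := by ring
    have e3 : ∑ v : Fin (k + 1) → X, (Real.sqrt (χb v * w.w v) * φ v) ^ 2 = SQ := by
      rw [hSQ]
      refine Finset.sum_congr rfl fun v _ => ?_
      have h := Real.mul_self_sqrt (hcw v)
      calc (Real.sqrt (χb v * w.w v) * φ v) ^ 2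
          = (Real.sqrt (χb v * w.w v) * Real.sqrt (χb v * w.w v)) * (φ v * φ v) := by ring
      _ = (χb v * w.w v) * (φ v * φ v) := by rw [h]
      _ = χb v * (φ v * φ v * w.w v) := by ring
    rw [e1, e2, e3] at key
    calc SP * SP = SP ^ 2 := (pow_two SP).symm
    _ ≤ SN * SQ := key
  -- final numeric reasoning
  by_cases hSN0 : SN = 0
  · rw [hIN, hIQ, hSN0, mul_zero, Real.sqrt_zero]
    have h1 : (0:ℝ) ≤ (k : ℝ) + 1 := by positivity
    exact mul_nonneg (mul_nonneg h1 hC0) (Real.sqrt_nonneg _)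
  · have hSNpos : 0 < SN := lt_of_le_of_ne hSNnn (Ne.symm hSN0)
    set K : ℝ := ((k : ℝ) + 1) * C with hK
    have hKnn : 0 ≤ K := mul_nonneg (by positivity) hC0
    have hfin : SN ≤ K ^ 2 * SQ := by
      have h9 : SN * SN ≤ (K * SP) * (K * SP) :=
        mul_le_mul hchain hchain hSNnn (le_trans hSNnn hchain)
      have h11 : K ^ 2 * (SP * SP) ≤ K ^ 2 * (SN * SQ) :=
        mul_le_mul_of_nonneg_left hCS (sq_nonneg K)
      have h12 : SN * SN ≤ (K ^ 2 * SQ) * SN := by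
        calc SN * SN ≤ (K * SP) * (K * SP) := h9
        _ = K ^ 2 * (SP * SP) := by ring
        _ ≤ K ^ 2 * (SN * SQ) := h11
        _ = (K ^ 2 * SQ) * SN := by ring
      exact (mul_le_mul_iff_of_pos_right hSNpos).mp h12
    rw [hIN, hIQ]
    have hmono : ((k.factorial : ℝ))⁻¹ * SN ≤ K ^ 2 * (((k.factorial : ℝ))⁻¹ * SQ) := by
      have hf : (0:ℝ) ≤ ((k.factorial : ℝ))⁻¹ := by positivity
      calc ((k.factorial : ℝ))⁻¹ * SN ≤ ((k.factorial : ℝ))⁻¹ * (K ^ 2 * SQ) :=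
            mul_le_mul_of_nonneg_left hfin hf
      _ = K ^ 2 * (((k.factorial : ℝ))⁻¹ * SQ) := by ring
    calc Real.sqrt (((k.factorial : ℝ))⁻¹ * SN)
        ≤ Real.sqrt (K ^ 2 * (((k.factorial : ℝ))⁻¹ * SQ)) := Real.sqrt_le_sqrt hmono
    _ = K * Real.sqrt (((k.factorial : ℝ))⁻¹ * SQ) := by
        rw [Real.sqrt_mul (sq_nonneg K), Real.sqrt_sq hKnn]
    _ = ((k : ℝ) + 1) * C * Real.sqrt (((k.factorial : ℝ))⁻¹ * SQ) := by rw [hK]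


end GraphHodge
end
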